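/- For a Dung framework AF and probability assignment P, the epistemic labeling of P is conflict-free if and only if P is rational and discharging. -/
import Mathlib


/-- The three labels: in, out, undecided. -/
inductive Lab
  | lin
  | lout
  | lundec
deriving DecidableEq

variable {α : Type*}

open Classical in
/-- The epistemic labeling associated with a probability assignment. -/
noncomputable def epiLab (P : α → ℝ) (a : α) : Lab :=
  if 1/2 < P a then Lab.lin else if P a < 1/2 then Lab.lout else Lab.lundec

/-- A labeling is conflict-free: every out argument is legally out, and no
in argument attacks an in argument. -/
def ConflictFreeLab (att : α → α → Prop) (L : α → Lab) : Prop :=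
  (∀ a, L a = Lab.lout → ∃ b, att b a ∧ L b = Lab.lin) ∧
  (∀ a b, L a = Lab.lin → L b = Lab.lin → ¬ att a b)

/-- A labeling is admissible: every in argument is legally in and every out
argument is legally out. -/
def AdmissibleLab (att : α → α → Prop) (L : α → Lab) : Prop :=
  (∀ a, L a = Lab.lin → ∀ b, att b a → L b = Lab.lout) ∧
  (∀ a, L a = Lab.lout → ∃ b, att b a ∧ L b = Lab.lin)

/-- A labeling is complete: admissible and every undecided argument is
legally undecided. -/
def CompleteLab (att : α → α → Prop) (L : α → Lab) : Prop :=
  AdmissibleLab att L ∧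
  (∀ a, L a = Lab.lundec →
    (¬ ∀ b, att b a → L b = Lab.lout) ∧ (∀ b, att b a → L b ≠ Lab.lin))

/-- Rational (RAT). -/
def Rational (att : α → α → Prop) (P : α → ℝ) : Prop :=
  ∀ a b, att a b → 1/2 < P a → P b ≤ 1/2

/-- Discharging (DIS). -/
def Discharging (att : α → α → Prop) (P : α → ℝ) : Prop :=
  ∀ b, P b < 1/2 → ∃ a, att a b ∧ 1/2 < P a

theorem epiLab_conflictFree_iff (att : α → α → Prop) (P : α → ℝ)
    (hP : ∀ a, 0 ≤ P a ∧ P a ≤ 1) :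
    ConflictFreeLab att (epiLab P) ↔ Rational att P ∧ Discharging att P := by

  have hin : ∀ a, epiLab P a = Lab.lin ↔ 1/2 < P a := by
    intro a; unfold epiLab; split_ifs <;> simp_all
  have hout : ∀ a, epiLab P a = Lab.lout ↔ P a < 1/2 := by
    intro a; unfold epiLab; split_ifs with h1 h2 <;> simp_all <;> linarith
  constructor
  · rintro ⟨h1, h2⟩
    constructor
    · intro a b hab ha
      by_contra hb
      push_neg at hb
      exact h2 a b ((hin a).2 ha) ((hin b).2 hb) hab
    · intro b hb
      obtain ⟨a, hab, ha⟩ := h1 b ((hout b).2 hb)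
      exact ⟨a, hab, (hin a).1 ha⟩
  · rintro ⟨hR, hD⟩
    constructor
    · intro a ha
      obtain ⟨b, hba, hb⟩ := hD a ((hout a).1 ha)
      exact ⟨b, hba, (hin b).2 hb⟩
    · intro a b ha hb hab
      exact absurd (hR a b hab ((hin a).1 ha)) (not_le.2 ((hin b).1 hb))
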